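/- If N is a sound deterministic negotiation and s is an atom of N that synchronizes at least one loop of N, then the s-negotiation N_s is a sound deterministic negotiation. -/

import Mathlib

universe u v w x

/-- A negotiation over agents `A`, atom names `ν`, outcome names `ρ`, and
internal state spaces `Q a` for each agent `a`. -/
structure Negotiation (A : Type u) (ν : Type v) (ρ : Type w) (Q : A → Type x) where
  atoms : Finset ν
  init : ν
  final : ν
  parties : ν → Finset A
  outs : ν → Finset ρ
  trans : ν → A → ρ → Finset ν
  delta : ν → ρ → (∀ a, Q a) → (∀ a, Q a) → Prop
  init_mem : init ∈ atoms
  final_mem : final ∈ atoms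
  parties_nonempty : ∀ n ∈ atoms, (parties n).Nonempty
  outs_nonempty : ∀ n ∈ atoms, (outs n).Nonempty
  init_all : ∀ a, a ∈ parties init
  final_all : ∀ a, a ∈ parties final
  trans_sub : ∀ n ∈ atoms, ∀ a ∈ parties n, ∀ r ∈ outs n, trans n a r ⊆ atoms
  trans_empty_iff : ∀ n ∈ atoms, ∀ a ∈ parties n, ∀ r ∈ outs n, (trans n a r = ∅ ↔ n = final)
  delta_total : ∀ n ∈ atoms, ∀ r ∈ outs n, ∀ q, ∃ q', delta n r q q'
  delta_frame : ∀ n ∈ atoms, ∀ r ∈ outs n, ∀ q q', delta n r q q' → ∀ a ∉ parties n, q' a = q a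

namespace Negotiation

variable {A : Type u} {ν : Type v} {ρ : Type w} {Q : A → Type x}
variable [DecidableEq A]

/-- The initial marking. -/
def initM (N : Negotiation A ν ρ Q) : A → Finset ν := fun _ => {N.init}

/-- The final marking. -/
def finalM (_N : Negotiation A ν ρ Q) : A → Finset ν := fun _ => ∅

/-- A marking enables an atom if every party is ready to engage in it. -/
def Enables (N : Negotiation A ν ρ Q) (x : A → Finset ν) (n : ν) : Prop :=
  n ∈ N.atoms ∧ ∀ a ∈ N.parties n, n ∈ x a

/-- The small step `x →(n,r) x'`. -/
def Step (N : Negotiation A ν ρ Q) (x : A → Finset ν) (n : ν) (r : ρ)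
    (x' : A → Finset ν) : Prop :=
  N.Enables x n ∧ r ∈ N.outs n ∧
    ∀ a, x' a = if a ∈ N.parties n then N.trans n a r else x a

/-- Occurrence sequences: `Occ N x σ x'` means `x →σ x'`. -/
inductive Occ (N : Negotiation A ν ρ Q) : (A → Finset ν) → List (ν × ρ) → (A → Finset ν) → Prop
  | nil (x : A → Finset ν) : Occ N x [] x
  | cons {x : A → Finset ν} {n : ν} {r : ρ} {x' : A → Finset ν} {l : List (ν × ρ)}
      {x'' : A → Finset ν} :
      N.Step x n r x' → Occ N x' l x'' → Occ N x ((n, r) :: l) x''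

/-- A marking is reachable if some occurrence sequence leads to it from the initial marking. -/
def Reachable (N : Negotiation A ν ρ Q) (x : A → Finset ν) : Prop :=
  ∃ σ, Occ N N.initM σ x

/-- Soundness: every atom can become enabled, and every initial occurrence sequence can be
extended to a large step. -/
def Sound (N : Negotiation A ν ρ Q) : Prop :=
  (∀ n ∈ N.atoms, ∃ x, N.Reachable x ∧ N.Enables x n) ∧
  (∀ σ x, Occ N N.initM σ x → ∃ τ, Occ N x τ N.finalM)

/-- The edge relation of the graph of a negotiation. -/
def Edge (N : Negotiation A ν ρ Q) (n n' : ν) : Prop :=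
  n ∈ N.atoms ∧ ∃ a ∈ N.parties n, ∃ r ∈ N.outs n, n' ∈ N.trans n a r

/-- A negotiation is cyclic if its graph has a cycle. -/
def Cyclic (N : Negotiation A ν ρ Q) : Prop :=
  ∃ n, Relation.TransGen N.Edge n n

/-- A negotiation is acyclic if its graph has no cycle. -/
def Acyclic (N : Negotiation A ν ρ Q) : Prop := ¬ N.Cyclic

/-- A negotiation is deterministic if every transition value is a singleton
(except at the final atom). -/
def Deterministic (N : Negotiation A ν ρ Q) : Prop :=
  ∀ n ∈ N.atoms, n ≠ N.final → ∀ a ∈ N.parties n, ∀ r ∈ N.outs n, ∃ m, N.trans n a r = {m}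

/-- A loop: a nonempty occurrence sequence from a reachable marking back to itself. -/
def IsLoop (N : Negotiation A ν ρ Q) (σ : List (ν × ρ)) : Prop :=
  σ ≠ [] ∧ ∃ x, N.Reachable x ∧ Occ N x σ x

/-- The set of atoms occurring in an occurrence sequence. -/
def atomsOf [DecidableEq ν] (σ : List (ν × ρ)) : Finset ν := (σ.map Prod.fst).toFinset

/-- A minimal loop: no loop has a set of atoms that is a proper subset of its set of atoms. -/
def IsMinimalLoop [DecidableEq ν] (N : Negotiation A ν ρ Q) (σ : List (ν × ρ)) : Prop :=
  N.IsLoop σ ∧ ∀ σ', N.IsLoop σ' → ¬ atomsOf σ' ⊂ atomsOf σ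

/-- `s` is a synchronizer of the loop `σ`. -/
def Synchronizes [DecidableEq ν] (N : Negotiation A ν ρ Q) (s : ν) (σ : List (ν × ρ)) : Prop :=
  N.IsLoop σ ∧ s ∈ atomsOf σ ∧ ∀ p ∈ σ, N.parties p.1 ⊆ N.parties s

/-- A loop is synchronized if it has a synchronizer. -/
def Synchronized [DecidableEq ν] (N : Negotiation A ν ρ Q) (σ : List (ν × ρ)) : Prop :=
  ∃ s, N.Synchronizes s σ

/-- The set of synchronizers of a negotiation. -/
def Synchronizers [DecidableEq ν] (N : Negotiation A ν ρ Q) : Set ν :=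
  {s | ∃ σ, N.Synchronizes s σ}

/-- The outcome `(n,r)` unconditionally enables the atom `n'`. -/
def UncondEnables (N : Negotiation A ν ρ Q) (n : ν) (r : ρ) (n' : ν) : Prop :=
  N.parties n' ⊆ N.parties n ∧ ∀ a ∈ N.parties n', N.trans n a r = {n'}

/-- The state transformer of an occurrence sequence: the relational composition of the
transformers of its outcomes. -/
def seqDelta (N : Negotiation A ν ρ Q) : List (ν × ρ) → ((∀ a, Q a) → (∀ a, Q a) → Prop)
  | [] => Eq
  | p :: l => Relation.Comp (N.delta p.1 p.2) (N.seqDelta l)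

/-- The summary transformer `⟨N, r⟩` associated with a final outcome `r`. -/
def SummaryT (N : Negotiation A ν ρ Q) (r : ρ) : (∀ a, Q a) → (∀ a, Q a) → Prop :=
  fun q q' => ∃ σ, Occ N N.initM σ N.finalM ∧ σ.getLast? = some (N.final, r) ∧
    N.seqDelta σ q q'

/-- Equivalence of negotiations over the same agents. -/
def Equivalent (N₁ N₂ : Negotiation A ν ρ Q) : Prop :=
  (¬ N₁.Sound ∧ ¬ N₂.Sound) ∨
  (N₁.Sound ∧ N₂.Sound ∧ N₁.outs N₁.final = N₂.outs N₂.final ∧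
    ∀ r ∈ N₁.outs N₁.final, N₁.SummaryT r = N₂.SummaryT r)

/-- Total number of outcomes of all atoms, `|Out(N)|`. -/
def OutCard (N : Negotiation A ν ρ Q) : ℕ := ∑ n ∈ N.atoms, (N.outs n).card

/-- The target of an outcome `(n,r)`: the partial function assigning to each party its set of
next atoms. -/
def target (N : Negotiation A ν ρ Q) (n : ν) (r : ρ) : A → Option (Finset ν) :=
  fun a => if a ∈ N.parties n then some (N.trans n a r) else none

/-- `Ta(N)`: the set of targets of all outcomes of `N`. -/
def Targets (N : Negotiation A ν ρ Q) : Set (A → Option (Finset ν)) :=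
  {f | ∃ n ∈ N.atoms, ∃ r ∈ N.outs n, f = N.target n r}

section Rules

variable [DecidableEq ν] [DecidableEq ρ]

/-- The merge rule applied at atom `n`, merging outcomes `r₁, r₂` into the fresh outcome `rf`. -/
def MergeAt (n : ν) (r₁ r₂ rf : ρ) (N₁ N₂ : Negotiation A ν ρ Q) : Prop :=
  n ∈ N₁.atoms ∧ r₁ ∈ N₁.outs n ∧ r₂ ∈ N₁.outs n ∧ r₁ ≠ r₂ ∧
  (∀ a ∈ N₁.parties n, N₁.trans n a r₁ = N₁.trans n a r₂) ∧
  rf ∉ N₁.outs n ∧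
  N₂.atoms = N₁.atoms ∧ N₂.init = N₁.init ∧ N₂.final = N₁.final ∧
  N₂.parties = N₁.parties ∧
  N₂.outs n = insert rf (((N₁.outs n).erase r₁).erase r₂) ∧
  (∀ m, m ≠ n → N₂.outs m = N₁.outs m) ∧
  (∀ a, N₂.trans n a rf = N₁.trans n a r₁) ∧
  (∀ r ∈ ((N₁.outs n).erase r₁).erase r₂, ∀ a, N₂.trans n a r = N₁.trans n a r) ∧
  (∀ m, m ≠ n → N₂.trans m = N₁.trans m) ∧
  (N₂.delta n rf = fun q q' => N₁.delta n r₁ q q' ∨ N₁.delta n r₂ q q') ∧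
  (∀ r ∈ ((N₁.outs n).erase r₁).erase r₂, N₂.delta n r = N₁.delta n r) ∧
  (∀ m, m ≠ n → N₂.delta m = N₁.delta m)

/-- The condition "`n'` appears in no value of the transition function after steps (1)-(3)
of the shortcut rule applied to `(n, r)` and `n'`". -/
def ShortcutRemCond (N₁ : Negotiation A ν ρ Q) (n n' : ν) (r : ρ) : Prop :=
  (∀ m ∈ N₁.atoms, ∀ a ∈ N₁.parties m, ∀ r'' ∈ N₁.outs m,
      (m = n → r'' ≠ r) → n' ∉ N₁.trans m a r'') ∧
  (∀ a ∈ N₁.parties n, a ∉ N₁.parties n' → n' ∉ N₁.trans n a r) ∧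
  (∀ r' ∈ N₁.outs n', ∀ a ∈ N₁.parties n', n' ∉ N₁.trans n' a r')

/-- The shortcut rule applied at `(n,r)` shortcutting the unconditionally enabled atom `n'`,
with fresh outcome names given by `fr`. -/
def ShortcutAt (n n' : ν) (r : ρ) (fr : ρ → ρ) (N₁ N₂ : Negotiation A ν ρ Q) : Prop :=
  N₁.Deterministic ∧
  n ∈ N₁.atoms ∧ n' ∈ N₁.atoms ∧ n ≠ n' ∧ r ∈ N₁.outs n ∧
  N₁.UncondEnables n r n' ∧
  (∀ r₁ ∈ N₁.outs n', ∀ r₂ ∈ N₁.outs n', fr r₁ = fr r₂ → r₁ = r₂) ∧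
  (∀ r' ∈ N₁.outs n', fr r' ∉ N₁.outs n) ∧
  N₂.init = N₁.init ∧ N₂.final = N₁.final ∧
  N₂.outs n = ((N₁.outs n).erase r) ∪ (N₁.outs n').image fr ∧
  (∀ m ∈ N₂.atoms, m ≠ n → N₂.outs m = N₁.outs m) ∧
  (∀ m ∈ N₂.atoms, N₂.parties m = N₁.parties m) ∧
  (∀ r' ∈ N₁.outs n', ∀ a ∈ N₁.parties n', N₂.trans n a (fr r') = N₁.trans n' a r') ∧
  (∀ r' ∈ N₁.outs n', ∀ a ∈ N₁.parties n, a ∉ N₁.parties n' →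
      N₂.trans n a (fr r') = N₁.trans n a r) ∧
  (∀ r'' ∈ (N₁.outs n).erase r, ∀ a, N₂.trans n a r'' = N₁.trans n a r'') ∧
  (∀ m ∈ N₂.atoms, m ≠ n → N₂.trans m = N₁.trans m) ∧
  (∀ r' ∈ N₁.outs n', N₂.delta n (fr r') = Relation.Comp (N₁.delta n r) (N₁.delta n' r')) ∧
  (∀ r'' ∈ (N₁.outs n).erase r, N₂.delta n r'' = N₁.delta n r'') ∧
  (∀ m ∈ N₂.atoms, m ≠ n → N₂.delta m = N₁.delta m) ∧
  (ShortcutRemCond N₁ n n' r → N₂.atoms = N₁.atoms.erase n') ∧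
  (¬ ShortcutRemCond N₁ n n' r → N₂.atoms = N₁.atoms)

/-- The iteration rule applied at the self-loop outcome `(n, r)`, with fresh outcome names
given by `fr`. -/
def IterAt (n : ν) (r : ρ) (fr : ρ → ρ) (N₁ N₂ : Negotiation A ν ρ Q) : Prop :=
  n ∈ N₁.atoms ∧ r ∈ N₁.outs n ∧
  (∀ a ∈ N₁.parties n, N₁.trans n a r = {n}) ∧
  (∀ r₁ ∈ (N₁.outs n).erase r, ∀ r₂ ∈ (N₁.outs n).erase r, fr r₁ = fr r₂ → r₁ = r₂) ∧
  N₂.atoms = N₁.atoms ∧ N₂.init = N₁.init ∧ N₂.final = N₁.final ∧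
  N₂.parties = N₁.parties ∧
  N₂.outs n = ((N₁.outs n).erase r).image fr ∧
  (∀ m, m ≠ n → N₂.outs m = N₁.outs m) ∧
  (∀ r' ∈ (N₁.outs n).erase r, ∀ a, N₂.trans n a (fr r') = N₁.trans n a r') ∧
  (∀ m, m ≠ n → N₂.trans m = N₁.trans m) ∧
  (∀ r' ∈ (N₁.outs n).erase r,
      N₂.delta n (fr r') =
        Relation.Comp (Relation.ReflTransGen (N₁.delta n r)) (N₁.delta n r')) ∧
  (∀ m, m ≠ n → N₂.delta m = N₁.delta m)

/-- The merge rule as a relation between negotiations. -/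
def MergeRule (N₁ N₂ : Negotiation A ν ρ Q) : Prop :=
  ∃ n r₁ r₂ rf, MergeAt n r₁ r₂ rf N₁ N₂

/-- The shortcut rule as a relation between negotiations. -/
def ShortcutRule (N₁ N₂ : Negotiation A ν ρ Q) : Prop :=
  ∃ n n' r fr, ShortcutAt n n' r fr N₁ N₂

/-- The iteration rule as a relation between negotiations. -/
def IterRule (N₁ N₂ : Negotiation A ν ρ Q) : Prop :=
  ∃ n r fr, IterAt n r fr N₁ N₂

/-- The guard of the merge rule is satisfied somewhere in `N₁`. -/
def MergeApplicable (N₁ : Negotiation A ν ρ Q) : Prop :=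
  ∃ n ∈ N₁.atoms, ∃ r₁ ∈ N₁.outs n, ∃ r₂ ∈ N₁.outs n, r₁ ≠ r₂ ∧
    ∀ a ∈ N₁.parties n, N₁.trans n a r₁ = N₁.trans n a r₂

end Rules

/-- A rule application, identified by its parameters. -/
inductive RuleTag (ν : Type v) (ρ : Type w) where
  | merge (n : ν) (r₁ r₂ rf : ρ)
  | shortcut (n n' : ν) (r : ρ) (fr : ρ → ρ)
  | iter (n : ν) (r : ρ) (fr : ρ → ρ)

/-- Whether a rule tag is a merge rule. -/
def RuleTag.isMerge : RuleTag ν ρ → Prop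
  | .merge _ _ _ _ => True
  | _ => False

/-- Whether a rule tag is a merge or a shortcut rule. -/
def RuleTag.isMergeOrShortcut : RuleTag ν ρ → Prop
  | .iter _ _ _ => False
  | _ => True

section Chains

variable [DecidableEq ν] [DecidableEq ρ]

/-- Applying the rule given by a tag. -/
def ApplyRule : RuleTag ν ρ → Negotiation A ν ρ Q → Negotiation A ν ρ Q → Prop
  | .merge n r₁ r₂ rf => MergeAt n r₁ r₂ rf
  | .shortcut n n' r fr => ShortcutAt n n' r fr
  | .iter n r fr => IterAt n r fr

/-- Applying a finite sequence of rules. -/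
inductive Chain : List (RuleTag ν ρ) → Negotiation A ν ρ Q → Negotiation A ν ρ Q → Prop
  | nil (N : Negotiation A ν ρ Q) : Chain [] N N
  | cons {t : RuleTag ν ρ} {L : List (RuleTag ν ρ)} {N₁ N₂ N₃ : Negotiation A ν ρ Q} :
      ApplyRule t N₁ N₂ → Chain L N₂ N₃ → Chain (t :: L) N₁ N₃

end Chains

section Fragments

variable [DecidableEq ν]

/-- The atoms of the fragment `F_s`: atoms occurring in loops synchronized by `s`. -/
def FragAtoms (N : Negotiation A ν ρ Q) (s : ν) : Set ν :=
  {n | ∃ σ, N.Synchronizes s σ ∧ n ∈ atomsOf σ}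

/-- The outcomes of an atom `n` in the fragment `F_s`. -/
def FragOuts (N : Negotiation A ν ρ Q) (s : ν) (n : ν) : Set ρ :=
  {r | ∃ σ, N.Synchronizes s σ ∧ (n, r) ∈ σ}

/-- An exit of the fragment `F_s`: an outcome of `N` whose atom belongs to `F_s`
but which is not an outcome of `F_s`. -/
def IsExit (N : Negotiation A ν ρ Q) (s : ν) (e : ν) (re : ρ) : Prop :=
  e ∈ N.FragAtoms s ∧ re ∈ N.outs e ∧ re ∉ N.FragOuts s e

/-- Characterization of the `s`-negotiation `N_s`: a negotiation over the agents `P_s`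
whose atoms are those of the fragment `F_s` together with a fresh final atom, whose initial
atom is (the restriction of) `s`, and whose transition function agrees with the one of `F_s`
except that every value equal to `s` is replaced by the fresh final atom. -/
def IsSNeg (N : Negotiation A ν ρ Q) (s : ν)
    (M : Negotiation {a : A // a ∈ N.parties s} ν ρ (fun a => Q a.1)) : Prop :=
  ∃ nf : ν, nf ∉ N.FragAtoms s ∧
    (↑M.atoms : Set ν) = insert nf (N.FragAtoms s) ∧
    M.init = s ∧ M.final = nf ∧
    (∀ n ∈ N.FragAtoms s, ∀ a : {a : A // a ∈ N.parties s},
        (a ∈ M.parties n ↔ a.1 ∈ N.parties n)) ∧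
    (∀ n ∈ N.FragAtoms s, ∀ r : ρ, (r ∈ M.outs n ↔ r ∈ N.FragOuts s n)) ∧
    (∀ n ∈ N.FragAtoms s, ∀ r ∈ M.outs n, ∀ a : {a : A // a ∈ N.parties s},
        (↑(M.trans n a r) : Set ν) = (fun t => if t = s then nf else t) '' ↑(N.trans n a.1 r)) ∧
    (∀ n ∈ N.FragAtoms s, ∀ r ∈ M.outs n, ∀ q q',
        M.delta n r q q' ↔
          ∃ qf qf' : (∀ a, Q a),
            (∀ a : {a : A // a ∈ N.parties s}, qf a.1 = q a) ∧
            (∀ a : {a : A // a ∈ N.parties s}, qf' a.1 = q' a) ∧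
            N.delta n r qf qf')

end Fragments

section Procedure

variable [DecidableEq ν] [DecidableEq ρ]

/-- An execution of the reduction procedure on `N₀`:
`Ni 1` is obtained from `N₀` by exhaustive merging; while `Ni i` is cyclic, an atom `sel i`
whose `s`-negotiation is acyclic is selected, the sequence of merge and shortcut rules that
summarizes this `s`-negotiation (except its last rule) is applied to `Ni i` (giving `Nmid i`),
the iteration rule is applied at `sel i` (giving `Ni' i`), and then the merge rule is applied
exhaustively (giving `Ni (i+1)`); finally, the resulting acyclic negotiation is summarized by
merge and shortcut rules. -/
structure RedExec (N₀ : Negotiation A ν ρ Q) where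
  steps : ℕ
  Ni : ℕ → Negotiation A ν ρ Q
  Nmid : ℕ → Negotiation A ν ρ Q
  Ni' : ℕ → Negotiation A ν ρ Q
  sel : ℕ → ν
  initSeq : List (RuleTag ν ρ)
  segSeq : ℕ → List (RuleTag ν ρ)
  mergeSeq : ℕ → List (RuleTag ν ρ)
  finalSeq : List (RuleTag ν ρ)
  Nfin : Negotiation A ν ρ Q
  h_init : Chain initSeq N₀ (Ni 1)
  h_init_merge : ∀ t ∈ initSeq, t.isMerge
  h_init_irred : ¬ (Ni 1).MergeApplicable
  h_cyc : ∀ i, 1 ≤ i → i ≤ steps → (Ni i).Cyclic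
  h_acyc : ¬ (Ni (steps + 1)).Cyclic
  h_sel_mem : ∀ i, 1 ≤ i → i ≤ steps → sel i ∈ (Ni i).atoms
  h_sel_acyc : ∀ i, 1 ≤ i → i ≤ steps →
    ∀ M : Negotiation {a : A // a ∈ (Ni i).parties (sel i)} ν ρ (fun a => Q a.1),
      (Ni i).IsSNeg (sel i) M → M.Acyclic
  h_seg : ∀ i, 1 ≤ i → i ≤ steps →
    ∃ (M M' : Negotiation {a : A // a ∈ (Ni i).parties (sel i)} ν ρ (fun a => Q a.1))
      (t : RuleTag ν ρ),
      (Ni i).IsSNeg (sel i) M ∧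
      Chain (segSeq i ++ [t]) M M' ∧ M'.atoms.card = 1 ∧
      (∀ u ∈ segSeq i ++ [t], u.isMergeOrShortcut) ∧
      Chain (segSeq i) (Ni i) (Nmid i)
  h_iter : ∀ i, 1 ≤ i → i ≤ steps → ∃ r fr, IterAt (sel i) r fr (Nmid i) (Ni' i)
  h_merge : ∀ i, 1 ≤ i → i ≤ steps →
    Chain (mergeSeq i) (Ni' i) (Ni (i + 1)) ∧ (∀ t ∈ mergeSeq i, t.isMerge) ∧
      ¬ (Ni (i + 1)).MergeApplicable
  h_final : Chain finalSeq (Ni (steps + 1)) Nfin ∧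
    (∀ t ∈ finalSeq, t.isMergeOrShortcut) ∧ Nfin.atoms.card = 1
  h_stable : ∀ i, steps + 1 ≤ i → Ni i = Ni (steps + 1)
  h_stable' : ∀ i, i < 1 ∨ steps < i → Ni' i = Ni i

/-- The total number of rule applications in an execution of the reduction procedure. -/
def RedExec.appl {N₀ : Negotiation A ν ρ Q} (E : RedExec N₀) : ℕ :=
  E.initSeq.length +
    (∑ i ∈ Finset.Icc 1 E.steps, ((E.segSeq i).length + 1 + (E.mergeSeq i).length)) +
    E.finalSeq.length

end Procedure

end Negotiation

/-!
By determinism every agent of `P_s` carries exactly one token, and the outcomes occurring in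
loops synchronized by `s` send tokens of agents of `P_s` to atoms of such loops. Hence a marking
of `N` in which all agents of `P_s` sit on atoms of the fragment corresponds to a marking of
`N_s` (a token on `s` being read as a token on the fresh final atom), and a step of a fragment
outcome at an atom other than `s` is mirrored on both sides. Every reachable marking of `N_s`
is initial, final or of this kind, so soundness of `N_s` comes down to: from a reachable marking
of `N` with all tokens of `P_s` on fragment atoms, fragment outcomes bring all of them back to
`s`. To see this, rank each fragment atom by the number of rounds of fragment outcomes needed to
drive its parties back to `s`; the rank is finite because the atom lies on a loop through `s`.
Soundness of `N` makes some fragment atom enabled, and firing it with a rank-decreasing outcome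
lowers the sum of the ranks of the tokens.
-/

namespace Negotiation

variable {A : Type*} {ν : Type*} {ρ : Type*} {Q : A → Type*}

theorem not_enables_finalM {N : Negotiation A ν ρ Q} {n : ν} (hn : n ∈ N.atoms) :
    ¬ N.Enables N.finalM n := fun h => by
  obtain ⟨a, ha⟩ := N.parties_nonempty n hn
  simpa [finalM] using h.2 a ha

section Occurrences

variable [DecidableEq A] {N : Negotiation A ν ρ Q} {x x' y w : A → Finset ν} {n : ν} {r : ρ}
  {a : A} {σ τ : List (ν × ρ)}

theorem exists_step (h : N.Enables x n) (hr : r ∈ N.outs n) : ∃ x', N.Step x n r x' :=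
  ⟨_, h, hr, fun _ => rfl⟩

theorem Step.apply_of_mem (h : N.Step x n r x') (ha : a ∈ N.parties n) :
    x' a = N.trans n a r := by
  rw [h.2.2 a, if_pos ha]

theorem Step.apply_of_not_mem (h : N.Step x n r x') (ha : a ∉ N.parties n) : x' a = x a := by
  rw [h.2.2 a, if_neg ha]

theorem Step.eq_finalM (h : N.Step x N.final r x') : x' = N.finalM :=
  funext fun a => by
    rw [h.apply_of_mem (N.final_all a)]
    exact (N.trans_empty_iff _ N.final_mem a (N.final_all a) r h.2.1).2 rfl

theorem exists_step_finalM (h : N.Enables x N.final) : ∃ r, N.Step x N.final r N.finalM := by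
  obtain ⟨r, hr⟩ := N.outs_nonempty _ N.final_mem
  obtain ⟨x', hx'⟩ := exists_step h hr
  exact ⟨r, hx'.eq_finalM ▸ hx'⟩

theorem Occ.append (h₁ : N.Occ x σ y) (h₂ : N.Occ y τ w) : N.Occ x (σ ++ τ) w := by
  induction h₁ with
  | nil => exact h₂
  | cons hs _ ih => exact .cons hs (ih h₂)

theorem Occ.exists_of_append_cons {p : ν × ρ} (h : N.Occ x (σ ++ p :: τ) w) :
    ∃ y y', N.Occ x σ y ∧ N.Step y p.1 p.2 y' ∧ N.Occ y' τ w := by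
  induction σ generalizing x with
  | nil =>
    cases h with
    | cons hs hτ => exact ⟨x, _, .nil x, hs, hτ⟩
  | cons q σ ih =>
    cases h with
    | cons hs hσ =>
      obtain ⟨y, y', h₁, h₂, h₃⟩ := ih hσ
      exact ⟨y, y', .cons hs h₁, h₂, h₃⟩

theorem Occ.eq_finalM (h : N.Occ N.finalM σ y) : y = N.finalM := by
  cases h with
  | nil => rfl
  | cons hs _ => exact absurd hs.1 (not_enables_finalM hs.1.1)

theorem Occ.preserves {C : (A → Finset ν) → Prop} (h : N.Occ x σ y)
    (hC : ∀ x n r x', (n, r) ∈ σ → C x → N.Step x n r x' → C x') (hx : C x) : C y := by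
  induction h with
  | nil => exact hx
  | cons hs _ ih =>
    exact ih (fun _ _ _ _ hp => hC _ _ _ _ (List.mem_cons_of_mem _ hp))
      (hC _ _ _ _ List.mem_cons_self hx hs)

theorem Occ.token_eq_or_mem {t : ν} (h : N.Occ x σ y) (hx : x a = {t}) :
    y a = {t} ∨ ∃ q ∈ σ, q.1 = t := by
  induction h with
  | nil => exact Or.inl hx
  | @cons x n r x₁ σ y hs _ ih =>
    by_cases ha : a ∈ N.parties n
    · have hn := hs.1.2 a ha
      rw [hx, Finset.mem_singleton] at hn
      exact Or.inr ⟨(n, r), List.mem_cons_self, hn⟩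
    · rcases ih (by rw [hs.apply_of_not_mem ha, hx]) with h | ⟨q, hq, hqt⟩
      · exact Or.inl h
      · exact Or.inr ⟨q, List.mem_cons_of_mem _ hq, hqt⟩

theorem Reachable.occ (hx : N.Reachable x) (h : N.Occ x σ y) : N.Reachable y :=
  let ⟨π, hπ⟩ := hx
  ⟨π ++ σ, hπ.append h⟩

theorem Reachable.step (hx : N.Reachable x) (h : N.Step x n r x') : N.Reachable x' :=
  hx.occ (.cons h (.nil x'))

theorem Reachable.eq_empty_or_singleton (hD : N.Deterministic) (hx : N.Reachable x) (a : A) :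
    x a = ∅ ∨ ∃ t, x a = {t} := by
  obtain ⟨π, hπ⟩ := hx
  refine hπ.preserves (C := fun x => ∀ a, x a = ∅ ∨ ∃ t, x a = {t})
    (fun x n r x' _ hx hs b => ?_) (fun _ => Or.inr ⟨N.init, rfl⟩) a
  by_cases hb : b ∈ N.parties n
  · rw [hs.apply_of_mem hb]
    by_cases hn : n = N.final
    · exact Or.inl ((N.trans_empty_iff n hs.1.1 b hb r hs.2.1).2 hn)
    · exact Or.inr (hD n hs.1.1 hn b hb r hs.2.1)
  · rw [hs.apply_of_not_mem hb]
    exact hx b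

theorem Reachable.eq_singleton_of_mem (hD : N.Deterministic) (hx : N.Reachable x)
    (h : n ∈ x a) : x a = {n} := by
  rcases hx.eq_empty_or_singleton hD a with hxa | ⟨t, hxa⟩
  · simp [hxa] at h
  · rw [hxa, Finset.mem_singleton] at h
    rw [hxa, h]

end Occurrences

section Loops

variable [DecidableEq A] {N : Negotiation A ν ρ Q} {n : ν} {r : ρ} {σ : List (ν × ρ)}

theorem IsLoop.rotate {p : ν × ρ} (hL : N.IsLoop σ) (hp : p ∈ σ) :
    ∃ z z' l, N.Reachable z ∧ N.Step z p.1 p.2 z' ∧ N.Occ z' l z ∧ (p :: l).Perm σ := by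
  obtain ⟨-, x, hx, hσ⟩ := hL
  obtain ⟨l₁, l₂, rfl⟩ := List.append_of_mem hp
  obtain ⟨z, z', h₁, h₂, h₃⟩ := hσ.exists_of_append_cons
  exact ⟨z, z', l₂ ++ l₁, hx.occ h₁, h₂, h₃.append h₁,
    List.perm_append_comm (l₁ := p :: l₂)⟩

theorem IsLoop.ne_final (hL : N.IsLoop σ) (hp : (n, r) ∈ σ) : n ≠ N.final := by
  rintro rfl
  obtain ⟨z, z', l, -, hs, hocc, -⟩ := hL.rotate hp
  rw [hs.eq_finalM] at hocc
  have hz := hs.1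
  rw [hocc.eq_finalM] at hz
  exact not_enables_finalM N.final_mem hz

theorem IsLoop.exists_occ_between {p p' : ν × ρ} (hL : N.IsLoop σ) (hp : p ∈ σ) (hp' : p' ∈ σ)
    (hne : p' ≠ p) :
    ∃ w w₁ γ w', N.Reachable w ∧ N.Step w p.1 p.2 w₁ ∧ N.Occ w₁ γ w' ∧ N.Enables w' p'.1 ∧
      ∀ q ∈ γ, q ∈ σ := by
  obtain ⟨z, z', l, hz, hs, hocc, hperm⟩ := hL.rotate hp
  have hp'l : p' ∈ l := (List.mem_cons.1 (hperm.symm.subset hp')).resolve_left hne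
  obtain ⟨γ, γ₂, rfl⟩ := List.append_of_mem hp'l
  obtain ⟨w', w'', hγ, hs', -⟩ := hocc.exists_of_append_cons
  exact ⟨z, z', γ, w', hz, hs, hγ, hs'.1,
    fun q hq => hperm.subset (List.mem_cons_of_mem _ (List.mem_append_left _ hq))⟩

end Loops

section Fragment

variable [DecidableEq A] [DecidableEq ν] {N : Negotiation A ν ρ Q} {s n t : ν} {r : ρ} {a : A}
  {x x' : A → Finset ν}

@[simp]
theorem mem_atomsOf {σ : List (ν × ρ)} : n ∈ atomsOf σ ↔ ∃ r, (n, r) ∈ σ := by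
  simp [atomsOf]

theorem mem_fragAtoms_of_mem_fragOuts (h : r ∈ N.FragOuts s n) : n ∈ N.FragAtoms s :=
  let ⟨σ, hsy, hm⟩ := h
  ⟨σ, hsy, mem_atomsOf.2 ⟨r, hm⟩⟩

theorem exists_mem_fragOuts (h : n ∈ N.FragAtoms s) : ∃ r, r ∈ N.FragOuts s n :=
  let ⟨σ, hsy, hm⟩ := h
  let ⟨r, hr⟩ := mem_atomsOf.1 hm
  ⟨r, σ, hsy, hr⟩

theorem exists_step_of_mem_fragOuts (h : r ∈ N.FragOuts s n) : ∃ x x', N.Step x n r x' :=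
  let ⟨_, hsy, hm⟩ := h
  let ⟨x, x', _, _, hs, _⟩ := hsy.1.rotate hm
  ⟨x, x', hs⟩

theorem mem_outs_of_mem_fragOuts (h : r ∈ N.FragOuts s n) : r ∈ N.outs n :=
  let ⟨_, _, hs⟩ := exists_step_of_mem_fragOuts h
  hs.2.1

theorem mem_atoms_of_mem_fragAtoms (h : n ∈ N.FragAtoms s) : n ∈ N.atoms :=
  let ⟨_, hr⟩ := exists_mem_fragOuts h
  let ⟨_, _, hs⟩ := exists_step_of_mem_fragOuts hr
  hs.1.1

theorem parties_subset_of_mem_fragAtoms (h : n ∈ N.FragAtoms s) : N.parties n ⊆ N.parties s :=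
  let ⟨_, _, hsy, hm⟩ := exists_mem_fragOuts h
  hsy.2.2 _ hm

theorem exists_reachable_step_of_mem_fragAtoms (hs : s ∈ N.FragAtoms s) :
    ∃ u c u', N.Reachable u ∧ N.Step u s c u' ∧ c ∈ N.FragOuts s s :=
  let ⟨c, σ, hsy, hc⟩ := exists_mem_fragOuts hs
  let ⟨u, u', _, hu, hstep, _⟩ := hsy.1.rotate hc
  ⟨u, c, u', hu, hstep, σ, hsy, hc⟩

/-- The loop through `(n, r)` must bring the token of `a` back to `n`, so it visits the
successor. -/
theorem exists_trans_eq_singleton (hD : N.Deterministic) (hr : r ∈ N.FragOuts s n)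
    (ha : a ∈ N.parties n) : ∃ t ∈ N.FragAtoms s, N.trans n a r = {t} := by
  obtain ⟨σ, hsy, hm⟩ := hr
  obtain ⟨z, z', l, -, hs, hocc, hperm⟩ := hsy.1.rotate hm
  obtain ⟨t, ht⟩ := hD n hs.1.1 (hsy.1.ne_final hm) a ha r hs.2.1
  refine ⟨t, ?_, ht⟩
  rcases hocc.token_eq_or_mem (by rw [hs.apply_of_mem ha, ht] : z' a = {t}) with hz | ⟨q, hq, rfl⟩
  · have hn := hs.1.2 a ha
    rw [hz, Finset.mem_singleton] at hn
    exact hn ▸ mem_fragAtoms_of_mem_fragOuts ⟨σ, hsy, hm⟩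
  · exact ⟨σ, hsy, mem_atomsOf.2 ⟨q.2, hperm.subset (List.mem_cons_of_mem _ hq)⟩⟩

def OnFrag (N : Negotiation A ν ρ Q) (s : ν) (x : A → Finset ν) : Prop :=
  ∀ a ∈ N.parties s, ∃ t ∈ N.FragAtoms s, x a = {t}

theorem OnFrag.step (hD : N.Deterministic) (hx : N.OnFrag s x) (h : N.Step x n r x')
    (hr : r ∈ N.FragOuts s n) : N.OnFrag s x' := by
  intro a ha
  by_cases han : a ∈ N.parties n
  · obtain ⟨t, ht, htr⟩ := exists_trans_eq_singleton hD hr han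
    exact ⟨t, ht, by rw [h.apply_of_mem han, htr]⟩
  · rw [h.apply_of_not_mem han]
    exact hx a ha

/-- The first step of the run that involves an agent of `P_s` is at an enabled fragment atom. -/
theorem OnFrag.exists_enables (hx : N.OnFrag s x) (hs : (N.parties s).Nonempty)
    {σ : List (ν × ρ)} (hσ : N.Occ x σ N.finalM) : ∃ e ∈ N.FragAtoms s, N.Enables x e := by
  generalize hf : N.finalM = f at hσ
  induction hσ with
  | nil x =>
    obtain ⟨a, ha⟩ := hs
    obtain ⟨t, -, ht⟩ := hx a ha
    simp [← hf, finalM] at ht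
  | @cons x m q x₁ σ y hstep _ ih =>
    by_cases hm : ∃ a ∈ N.parties m, a ∈ N.parties s
    · obtain ⟨a, ham, has⟩ := hm
      obtain ⟨t, ht, hxa⟩ := hx a has
      have hmt := hstep.1.2 a ham
      rw [hxa, Finset.mem_singleton] at hmt
      exact ⟨m, hmt ▸ ht, hstep.1⟩
    · push Not at hm
      have hagree : ∀ a ∈ N.parties s, x₁ a = x a :=
        fun a ha => hstep.apply_of_not_mem fun h => hm a h ha
      obtain ⟨e, he, hen⟩ := ih (fun a ha => hagree a ha ▸ hx a ha) hf
      exact ⟨e, he, hen.1,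
        fun a ha => hagree a (parties_subset_of_mem_fragAtoms he ha) ▸ hen.2 a ha⟩

end Fragment

section Rank

variable [DecidableEq A] [DecidableEq ν] {N : Negotiation A ν ρ Q} {s t : ν} {k : ℕ}

def ReturnsWithin (N : Negotiation A ν ρ Q) (s : ν) : ℕ → ν → Prop
  | 0, t => t = s
  | k + 1, t => t = s ∨ ∃ r ∈ N.FragOuts s t,
      ∀ a ∈ N.parties t, ∀ t' ∈ N.trans t a r, N.ReturnsWithin s k t'

noncomputable def returnRank (N : Negotiation A ν ρ Q) (s t : ν) : ℕ :=
  sInf {k | N.ReturnsWithin s k t}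

noncomputable def returnPotential (N : Negotiation A ν ρ Q) (s : ν) (x : A → Finset ν) : ℕ :=
  ∑ a ∈ N.parties s, (x a).sup (N.returnRank s)

theorem ReturnsWithin.succ : ∀ {k : ℕ} {t : ν}, N.ReturnsWithin s k t → N.ReturnsWithin s (k + 1) t
  | 0, _, h => Or.inl h
  | _ + 1, _, h => h.imp id fun ⟨r, hr, h'⟩ => ⟨r, hr, fun a ha t' ht' => (h' a ha t' ht').succ⟩

theorem ReturnsWithin.mono {K : ℕ} (h : N.ReturnsWithin s k t) (hk : k ≤ K) :
    N.ReturnsWithin s K t := by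
  induction hk with
  | refl => exact h
  | step _ ih => exact ih.succ

theorem ReturnsWithin.returnRank (h : N.ReturnsWithin s k t) :
    N.ReturnsWithin s (N.returnRank s t) t :=
  Nat.sInf_mem (s := {k | N.ReturnsWithin s k t}) ⟨k, h⟩

theorem returnRank_le (h : N.ReturnsWithin s k t) : N.returnRank s t ≤ k :=
  Nat.sInf_le h

theorem Occ.exists_returnsWithin (hD : N.Deterministic) {x w : A → Finset ν}
    {σ : List (ν × ρ)} (hσ : N.Occ x σ w) (hσs : ∀ p ∈ σ, p.2 ∈ N.FragOuts s p.1)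
    (hw : ∀ a ∈ N.parties s, w a = {s}) {a : A} (ha : a ∈ N.parties s) (hxa : x a = {t}) :
    ∃ k, N.ReturnsWithin s k t := by
  induction hσ generalizing a t with
  | nil => exact ⟨0, Finset.singleton_inj.1 (hxa.symm.trans (hw a ha))⟩
  | @cons x m r x₁ σ w hstep _ ih =>
    have hσs' := fun p hp => hσs p (List.mem_cons_of_mem _ hp)
    by_cases ham : a ∈ N.parties m
    · have htm := hstep.1.2 a ham
      rw [hxa, Finset.mem_singleton] at htm
      subst htm
      by_cases hms : m = s
      · exact ⟨0, hms⟩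
      have hr : r ∈ N.FragOuts s m := hσs _ List.mem_cons_self
      have hsucc : ∀ b ∈ N.parties m, ∀ t' ∈ N.trans m b r,
          N.ReturnsWithin s (N.returnRank s t') t' := by
        intro b hb t' ht'
        obtain ⟨u, -, hu⟩ := exists_trans_eq_singleton hD hr hb
        rw [hu, Finset.mem_singleton] at ht'
        subst ht'
        obtain ⟨k, hk⟩ := ih hσs' hw (parties_subset_of_mem_fragAtoms
          (mem_fragAtoms_of_mem_fragOuts hr) hb) (by rw [hstep.apply_of_mem hb, hu])
        exact hk.returnRank
      refine ⟨(N.parties m).sup (fun b => (N.trans m b r).sup (N.returnRank s)) + 1,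
        Or.inr ⟨r, hr, fun b hb t' ht' => (hsucc b hb t' ht').mono ?_⟩⟩
      exact (Finset.le_sup ht').trans
        (Finset.le_sup (f := fun b => (N.trans m b r).sup (N.returnRank s)) hb)
    · exact ih hσs' hw ha (by rw [hstep.apply_of_not_mem ham, hxa])

/-- Follow a loop through `t` up to its next visit of `s`. -/
theorem exists_returnsWithin (hD : N.Deterministic) (ht : t ∈ N.FragAtoms s) :
    ∃ k, N.ReturnsWithin s k t := by
  by_cases hts : t = s
  · exact ⟨0, hts⟩
  obtain ⟨σ, hsy, htσ⟩ := ht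
  obtain ⟨q, hq⟩ := mem_atomsOf.1 htσ
  obtain ⟨c, hc⟩ := mem_atomsOf.1 hsy.2.1
  obtain ⟨w, w₁, γ, w', hw, hstep, hocc, hen, hγ⟩ :=
    hsy.1.exists_occ_between hq hc (by simp [Ne.symm hts])
  obtain ⟨a, ha⟩ := N.parties_nonempty t hstep.1.1
  have hw' : N.Reachable w' := (hw.step hstep).occ hocc
  refine (Occ.cons hstep hocc).exists_returnsWithin hD (fun p hp => ⟨σ, hsy, ?_⟩)
    (fun b hb => hw'.eq_singleton_of_mem hD (hen.2 b hb))
    (hsy.2.2 _ hq ha) (hw.eq_singleton_of_mem hD (hstep.1.2 a ha))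
  rcases List.mem_cons.1 hp with rfl | hp
  · exact hq
  · exact hγ p hp

theorem returnsWithin_returnRank (hD : N.Deterministic) (ht : t ∈ N.FragAtoms s) :
    N.ReturnsWithin s (N.returnRank s t) t :=
  let ⟨_, hk⟩ := exists_returnsWithin hD ht
  hk.returnRank

theorem exists_step_returnPotential_lt (hD : N.Deterministic) (hS : N.Sound)
    {x : A → Finset ν} (hx : N.Reachable x) (hfx : N.OnFrag s x)
    (hxs : ¬ ∀ a ∈ N.parties s, x a = {s}) :
    ∃ e r x', N.Step x e r x' ∧ r ∈ N.FragOuts s e ∧ e ≠ s ∧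
      N.returnPotential s x' < N.returnPotential s x := by
  obtain ⟨a₀, ha₀, -⟩ := not_forall₂.1 hxs
  obtain ⟨π, hπ⟩ := hx
  obtain ⟨τ, hτ⟩ := hS.2 π x hπ
  obtain ⟨e, he, hen⟩ := hfx.exists_enables ⟨a₀, ha₀⟩ hτ
  have hxe : ∀ a ∈ N.parties e, x a = {e} :=
    fun a ha => Reachable.eq_singleton_of_mem hD ⟨π, hπ⟩ (hen.2 a ha)
  have hes : e ≠ s := by
    rintro rfl
    exact hxs hxe
  have hrank := returnsWithin_returnRank hD he
  obtain ⟨k, hk⟩ := Nat.exists_eq_succ_of_ne_zero (n := N.returnRank s e)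
    fun h0 => hes (by rwa [h0] at hrank)
  rw [hk] at hrank
  obtain ⟨r, hr, hnext⟩ := hrank.resolve_left hes
  obtain ⟨x', hx'⟩ := exists_step hen (mem_outs_of_mem_fragOuts hr)
  have hdrop : ∀ a ∈ N.parties e, (x' a).sup (N.returnRank s) < (x a).sup (N.returnRank s) := by
    intro a ha
    rw [hx'.apply_of_mem ha, hxe a ha, Finset.sup_singleton, hk, Nat.lt_succ_iff]
    exact Finset.sup_le fun t ht => returnRank_le (hnext a ha t ht)
  have hsub := parties_subset_of_mem_fragAtoms he
  refine ⟨e, r, x', hx', hr, hes, Finset.sum_lt_sum (fun a _ => ?_) ?_⟩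
  · by_cases ha : a ∈ N.parties e
    · exact (hdrop a ha).le
    · rw [hx'.apply_of_not_mem ha]
  · obtain ⟨a, ha⟩ := N.parties_nonempty e hen.1
    exact ⟨a, hsub ha, hdrop a ha⟩

theorem exists_occ_to_s (hD : N.Deterministic) (hS : N.Sound) {x : A → Finset ν}
    (hx : N.Reachable x) (hfx : N.OnFrag s x) :
    ∃ σ w, N.Occ x σ w ∧ (∀ p ∈ σ, p.2 ∈ N.FragOuts s p.1 ∧ p.1 ≠ s) ∧
      ∀ a ∈ N.parties s, w a = {s} := by
  induction hφ : N.returnPotential s x using Nat.strong_induction_on generalizing x with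
  | _ φ ih =>
    by_cases hxs : ∀ a ∈ N.parties s, x a = {s}
    · exact ⟨[], x, .nil x, by simp, hxs⟩
    obtain ⟨e, r, x', hx', hr, hes, hlt⟩ := exists_step_returnPotential_lt hD hS hx hfx hxs
    obtain ⟨σ, w, hσ, hσs, hw⟩ := ih _ (hφ ▸ hlt) (hx.step hx') (hfx.step hD hx' hr) rfl
    exact ⟨(e, r) :: σ, w, .cons hx' hσ, List.forall_mem_cons.2 ⟨⟨hr, hes⟩, hσs⟩, hw⟩

end Rank

section SNegotiation

variable [DecidableEq A] [DecidableEq ν] {N : Negotiation A ν ρ Q} {s nf n : ν} {r : ρ}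
  {M : Negotiation {a : A // a ∈ N.parties s} ν ρ (fun a => Q a.1)}
  {x x' : A → Finset ν} {y y' : {a : A // a ∈ N.parties s} → Finset ν}

/-- `IsSNeg` with the fresh final atom fixed and the transformers forgotten. -/
structure IsSNegControl (N : Negotiation A ν ρ Q) (s nf : ν)
    (M : Negotiation {a : A // a ∈ N.parties s} ν ρ (fun a => Q a.1)) : Prop where
  final_not_mem : nf ∉ N.FragAtoms s
  coe_atoms : (↑M.atoms : Set ν) = insert nf (N.FragAtoms s)
  init_eq : M.init = s
  final_eq : M.final = nf
  mem_parties_iff : ∀ n ∈ N.FragAtoms s, ∀ a : {a : A // a ∈ N.parties s},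
    a ∈ M.parties n ↔ a.1 ∈ N.parties n
  mem_outs_iff : ∀ n ∈ N.FragAtoms s, ∀ r, r ∈ M.outs n ↔ r ∈ N.FragOuts s n
  coe_trans : ∀ n ∈ N.FragAtoms s, ∀ r ∈ M.outs n, ∀ a : {a : A // a ∈ N.parties s},
    (↑(M.trans n a r) : Set ν) = (fun t => if t = s then nf else t) '' ↑(N.trans n a.1 r)

theorem IsSNeg.exists_isSNegControl (h : N.IsSNeg s M) : ∃ nf, IsSNegControl N s nf M :=
  let ⟨nf, h₁, h₂, h₃, h₄, h₅, h₆, h₇, _⟩ := h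
  ⟨nf, h₁, h₂, h₃, h₄, h₅, h₆, h₇⟩

def Corresponds (N : Negotiation A ν ρ Q) (s nf : ν) (x : A → Finset ν)
    (y : {a : A // a ∈ N.parties s} → Finset ν) : Prop :=
  ∀ a, ∃ t ∈ N.FragAtoms s, x a.1 = {t} ∧ y a = {if t = s then nf else t}

theorem Corresponds.onFrag (h : Corresponds N s nf x y) : N.OnFrag s x := fun a ha =>
  let ⟨t, ht, hx, _⟩ := h ⟨a, ha⟩
  ⟨t, ht, hx⟩

namespace IsSNegControl

theorem mem_atoms (hM : IsSNegControl N s nf M) (hn : n ∈ N.FragAtoms s) : n ∈ M.atoms := by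
  rw [← Finset.mem_coe, hM.coe_atoms]
  exact Set.mem_insert_of_mem _ hn

theorem eq_final_or_mem (hM : IsSNegControl N s nf M) (hn : n ∈ M.atoms) :
    n = nf ∨ n ∈ N.FragAtoms s := by
  rwa [← Finset.mem_coe, hM.coe_atoms] at hn

theorem trans_eq (hM : IsSNegControl N s nf M) (hn : n ∈ N.FragAtoms s) (hr : r ∈ M.outs n)
    {a : {a : A // a ∈ N.parties s}} {t : ν} (ht : N.trans n a.1 r = {t}) :
    M.trans n a r = {if t = s then nf else t} := by
  apply Finset.coe_injective
  rw [hM.coe_trans n hn r hr a, ht, Finset.coe_singleton, Set.image_singleton,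
    Finset.coe_singleton]

theorem deterministic (hM : IsSNegControl N s nf M) (hD : N.Deterministic) :
    M.Deterministic := by
  intro n hn hnf a ha r hr
  rcases hM.eq_final_or_mem hn with rfl | hn
  · exact absurd hM.final_eq.symm hnf
  · obtain ⟨t, -, ht⟩ := exists_trans_eq_singleton hD ((hM.mem_outs_iff n hn r).1 hr)
      ((hM.mem_parties_iff n hn a).1 ha)
    exact ⟨_, hM.trans_eq hn hr ht⟩

theorem enables_initM (hM : IsSNegControl N s nf M) (hs : s ∈ N.FragAtoms s) :
    M.Enables M.initM s :=
  ⟨hM.mem_atoms hs, fun _ _ => by simp [initM, hM.init_eq]⟩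

theorem not_mem_of_corresponds (hM : IsSNegControl N s nf M) (hxy : Corresponds N s nf x y)
    (hs : s ∈ N.FragAtoms s) (a : {a : A // a ∈ N.parties s}) : s ∉ y a := by
  obtain ⟨t, -, -, hya⟩ := hxy a
  rw [hya, Finset.mem_singleton]
  split_ifs with hts
  · exact fun h => hM.final_not_mem (h ▸ hs)
  · exact fun h => hts h.symm

theorem enables_iff (hM : IsSNegControl N s nf M) (hxy : Corresponds N s nf x y)
    (hn : n ∈ N.FragAtoms s) (hns : n ≠ s) : M.Enables y n ↔ N.Enables x n := by
  have hnf : n ≠ nf := fun h => hM.final_not_mem (h ▸ hn)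
  have hmem : ∀ a, n ∈ y a ↔ n ∈ x a.1 := by
    intro a
    obtain ⟨t, -, hx, hy⟩ := hxy a
    rw [hx, hy, Finset.mem_singleton, Finset.mem_singleton]
    split_ifs with hts
    · simp [hts, hns, hnf]
    · rfl
  simp only [Enables, hM.mem_atoms hn, mem_atoms_of_mem_fragAtoms hn, true_and]
  constructor
  · intro h a ha
    exact (hmem ⟨a, parties_subset_of_mem_fragAtoms hn ha⟩).1
      (h _ ((hM.mem_parties_iff n hn _).2 ha))
  · intro h a ha
    exact (hmem a).2 (h _ ((hM.mem_parties_iff n hn a).1 ha))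

theorem corresponds_of_step (hM : IsSNegControl N s nf M) (hD : N.Deterministic)
    (hr : r ∈ N.FragOuts s n) (hx : N.Step x n r x') (hy : M.Step y n r y')
    (hxy : ∀ a, a ∉ M.parties n → ∃ t ∈ N.FragAtoms s, x a.1 = {t} ∧
      y a = {if t = s then nf else t}) :
    Corresponds N s nf x' y' := by
  have hn := mem_fragAtoms_of_mem_fragOuts hr
  intro a
  by_cases ha : a ∈ M.parties n
  · have haN := (hM.mem_parties_iff n hn a).1 ha
    obtain ⟨t, ht, htr⟩ := exists_trans_eq_singleton hD hr haN
    exact ⟨t, ht, by rw [hx.apply_of_mem haN, htr],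
      by rw [hy.apply_of_mem ha, hM.trans_eq hn hy.2.1 htr]⟩
  · rw [hx.apply_of_not_mem (mt (hM.mem_parties_iff n hn a).2 ha), hy.apply_of_not_mem ha]
    exact hxy a ha

theorem corresponds_of_step_s (hM : IsSNegControl N s nf M) (hD : N.Deterministic)
    (hr : r ∈ N.FragOuts s s) (hx : N.Step x s r x') (hy : M.Step y s r y') :
    Corresponds N s nf x' y' :=
  hM.corresponds_of_step hD hr hx hy fun a ha =>
    absurd ((hM.mem_parties_iff s (mem_fragAtoms_of_mem_fragOuts hr) a).2 a.2) ha

theorem lift_step (hM : IsSNegControl N s nf M) (hD : N.Deterministic)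
    (hxy : Corresponds N s nf x y) (hx : N.Step x n r x') (hr : r ∈ N.FragOuts s n)
    (hns : n ≠ s) : ∃ y', M.Step y n r y' ∧ Corresponds N s nf x' y' := by
  have hn := mem_fragAtoms_of_mem_fragOuts hr
  obtain ⟨y', hy⟩ :=
    exists_step ((hM.enables_iff hxy hn hns).2 hx.1) ((hM.mem_outs_iff n hn r).2 hr)
  exact ⟨y', hy, hM.corresponds_of_step hD hr hx hy fun a _ => hxy a⟩

theorem project_step (hM : IsSNegControl N s nf M) (hD : N.Deterministic)
    (hxy : Corresponds N s nf x y) (hy : M.Step y n r y') (hn : n ∈ N.FragAtoms s) :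
    ∃ x', N.Step x n r x' ∧ Corresponds N s nf x' y' := by
  have hns : n ≠ s := by
    rintro rfl
    obtain ⟨a, ha⟩ := M.parties_nonempty n hy.1.1
    exact hM.not_mem_of_corresponds hxy hn a (hy.1.2 a ha)
  have hr := (hM.mem_outs_iff n hn r).1 hy.2.1
  obtain ⟨x', hx⟩ :=
    exists_step ((hM.enables_iff hxy hn hns).1 hy.1) (mem_outs_of_mem_fragOuts hr)
  exact ⟨x', hx, hM.corresponds_of_step hD hr hx hy fun a _ => hxy a⟩

theorem lift_occ (hM : IsSNegControl N s nf M) (hD : N.Deterministic)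
    (hxy : Corresponds N s nf x y) {σ : List (ν × ρ)} {w : A → Finset ν} (hσ : N.Occ x σ w)
    (hσs : ∀ p ∈ σ, p.2 ∈ N.FragOuts s p.1 ∧ p.1 ≠ s) :
    ∃ y', M.Occ y σ y' ∧ Corresponds N s nf w y' := by
  induction hσ generalizing y with
  | nil => exact ⟨y, .nil y, hxy⟩
  | cons hx _ ih =>
    obtain ⟨hr, hns⟩ := hσs _ List.mem_cons_self
    obtain ⟨y₁, hy₁, hxy₁⟩ := hM.lift_step hD hxy hx hr hns
    obtain ⟨y', hy', hxy'⟩ := ih hxy₁ (fun p hp => hσs p (List.mem_cons_of_mem _ hp))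
    exact ⟨y', .cons hy₁ hy', hxy'⟩

theorem exists_reachable_of_step_s (hM : IsSNegControl N s nf M) (hD : N.Deterministic)
    (hr : r ∈ N.FragOuts s s) (hx : N.Step x s r x') :
    ∃ y', M.Reachable y' ∧ Corresponds N s nf x' y' := by
  have hs := mem_fragAtoms_of_mem_fragOuts hr
  obtain ⟨y', hy⟩ := exists_step (hM.enables_initM hs) ((hM.mem_outs_iff s hs r).2 hr)
  exact ⟨y', ⟨_, .cons hy (.nil y')⟩, hM.corresponds_of_step_s hD hr hx hy⟩

/-- Steps at `s` are not mirrored, but they restart `M` from its initial marking. -/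
theorem exists_reachable_of_occ (hM : IsSNegControl N s nf M) (hD : N.Deterministic)
    (hx : ∃ y, M.Reachable y ∧ Corresponds N s nf x y) {σ : List (ν × ρ)} {w : A → Finset ν}
    (hσ : N.Occ x σ w) (hσs : ∀ p ∈ σ, p.2 ∈ N.FragOuts s p.1) :
    ∃ y, M.Reachable y ∧ Corresponds N s nf w y := by
  refine hσ.preserves (C := fun x => ∃ y, M.Reachable y ∧ Corresponds N s nf x y)
    (fun x n r x' hp ⟨y, hy, hxy⟩ hx' => ?_) hx
  have hr := hσs _ hp
  by_cases hns : n = s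
  · subst hns
    exact hM.exists_reachable_of_step_s hD hr hx'
  · obtain ⟨y', hy', hxy'⟩ := hM.lift_step hD hxy hx' hr hns
    exact ⟨y', hy.step hy', hxy'⟩

theorem exists_reachable_corresponds (hM : IsSNegControl N s nf M) (hD : N.Deterministic)
    (hs : s ∈ N.FragAtoms s) :
    ∃ x y, N.Reachable x ∧ M.Reachable y ∧ Corresponds N s nf x y := by
  obtain ⟨u, c, u', hu, hstep, hc⟩ := exists_reachable_step_of_mem_fragAtoms hs
  obtain ⟨y, hy, hxy⟩ := hM.exists_reachable_of_step_s hD hc hstep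
  exact ⟨u', y, hu.step hstep, hy, hxy⟩

theorem reachable_cases (hM : IsSNegControl N s nf M) (hD : N.Deterministic)
    (hs : s ∈ N.FragAtoms s) (hy : M.Reachable y) :
    y = M.initM ∨ y = M.finalM ∨ ∃ x, N.Reachable x ∧ Corresponds N s nf x y := by
  obtain ⟨u, _, _, hu, hus, -⟩ := exists_reachable_step_of_mem_fragAtoms hs
  obtain ⟨σ, hσ⟩ := hy
  refine hσ.preserves
    (C := fun y => y = M.initM ∨ y = M.finalM ∨ ∃ x, N.Reachable x ∧ Corresponds N s nf x y)
    (fun y n r y' _ hC hy => ?_) (Or.inl rfl)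
  rcases hC with rfl | rfl | ⟨x, hx, hxy⟩
  · obtain ⟨a, ha⟩ := M.parties_nonempty n hy.1.1
    have hns : n = s := by simpa [initM, hM.init_eq] using hy.1.2 a ha
    subst hns
    have hr := (hM.mem_outs_iff n hs r).1 hy.2.1
    obtain ⟨x', hx'⟩ := exists_step hus.1 (mem_outs_of_mem_fragOuts hr)
    exact Or.inr (Or.inr ⟨x', hu.step hx', hM.corresponds_of_step_s hD hr hx' hy⟩)
  · exact absurd hy.1 (not_enables_finalM hy.1.1)
  · rcases hM.eq_final_or_mem hy.1.1 with rfl | hn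
    · rw [← hM.final_eq] at hy
      exact Or.inr (Or.inl hy.eq_finalM)
    · obtain ⟨x', hx', hxy'⟩ := hM.project_step hD hxy hy hn
      exact Or.inr (Or.inr ⟨x', hx.step hx', hxy'⟩)

theorem exists_occ_enables_final (hM : IsSNegControl N s nf M) (hD : N.Deterministic)
    (hS : N.Sound) (hxy : Corresponds N s nf x y) (hx : N.Reachable x) :
    ∃ σ y', M.Occ y σ y' ∧ M.Enables y' M.final := by
  obtain ⟨σ, w, hσ, hσs, hw⟩ := exists_occ_to_s hD hS hx hxy.onFrag
  obtain ⟨y', hy', hwy'⟩ := hM.lift_occ hD hxy hσ hσs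
  refine ⟨σ, y', hy', M.final_mem, fun a _ => ?_⟩
  obtain ⟨t, -, hwt, hyt⟩ := hwy' a
  rw [hw a.1 a.2, Finset.singleton_inj] at hwt
  rw [hyt, ← hwt, if_pos rfl, hM.final_eq]
  exact Finset.mem_singleton_self nf

theorem exists_occ_finalM_of_corresponds (hM : IsSNegControl N s nf M) (hD : N.Deterministic)
    (hS : N.Sound) (hxy : Corresponds N s nf x y) (hx : N.Reachable x) :
    ∃ τ, M.Occ y τ M.finalM := by
  obtain ⟨σ, y', hy', hen⟩ := hM.exists_occ_enables_final hD hS hxy hx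
  obtain ⟨r, hr⟩ := exists_step_finalM hen
  exact ⟨σ ++ [(M.final, r)], hy'.append (.cons hr (.nil _))⟩

theorem exists_occ_finalM (hM : IsSNegControl N s nf M) (hD : N.Deterministic)
    (hS : N.Sound) (hs : s ∈ N.FragAtoms s) (hy : M.Reachable y) :
    ∃ τ, M.Occ y τ M.finalM := by
  rcases hM.reachable_cases hD hs hy with rfl | rfl | ⟨x, hx, hxy⟩
  · obtain ⟨x, y, hx, ⟨σ, hσ⟩, hxy⟩ := hM.exists_reachable_corresponds hD hs
    obtain ⟨τ, hτ⟩ := hM.exists_occ_finalM_of_corresponds hD hS hxy hx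
    exact ⟨σ ++ τ, hσ.append hτ⟩
  · exact ⟨[], .nil _⟩
  · exact hM.exists_occ_finalM_of_corresponds hD hS hxy hx

/-- Walk along a loop synchronized by `s` from a visit of `s` to `n`. -/
theorem exists_reachable_enables_of_mem (hM : IsSNegControl N s nf M) (hD : N.Deterministic)
    (hn : n ∈ N.FragAtoms s) (hns : n ≠ s) : ∃ y, M.Reachable y ∧ M.Enables y n := by
  obtain ⟨σ, hsy, hnσ⟩ := id hn
  obtain ⟨q, hq⟩ := mem_atomsOf.1 hnσ
  obtain ⟨c, hc⟩ := mem_atomsOf.1 hsy.2.1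
  obtain ⟨_, w₁, γ, w', _, hstep, hocc, hen, hγ⟩ :=
    hsy.1.exists_occ_between hc hq (by simp [hns])
  obtain ⟨y₁, hy₁, hxy₁⟩ := hM.exists_reachable_of_step_s hD ⟨σ, hsy, hc⟩ hstep
  obtain ⟨y, hy, hxy⟩ := hM.exists_reachable_of_occ hD ⟨y₁, hy₁, hxy₁⟩ hocc
    fun p hp => ⟨σ, hsy, hγ p hp⟩
  exact ⟨y, hy, (hM.enables_iff hxy hn hns).2 hen⟩

theorem exists_reachable_enables (hM : IsSNegControl N s nf M) (hD : N.Deterministic)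
    (hS : N.Sound) (hs : s ∈ N.FragAtoms s) (hn : n ∈ M.atoms) :
    ∃ y, M.Reachable y ∧ M.Enables y n := by
  rcases hM.eq_final_or_mem hn with rfl | hn
  · obtain ⟨x, y, hx, ⟨σ, hσ⟩, hxy⟩ := hM.exists_reachable_corresponds hD hs
    obtain ⟨τ, y', hτ, hen⟩ := hM.exists_occ_enables_final hD hS hxy hx
    exact ⟨y', ⟨σ ++ τ, hσ.append hτ⟩, hM.final_eq ▸ hen⟩
  · by_cases hns : n = s
    · subst hns
      exact ⟨M.initM, ⟨[], .nil _⟩, hM.enables_initM hn⟩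
    · exact hM.exists_reachable_enables_of_mem hD hn hns

end IsSNegControl

end SNegotiation

end Negotiation

open Negotiation

variable {A : Type} {ν : Type} {ρ : Type} {Q : A → Type}
variable [DecidableEq A] [DecidableEq ν] [DecidableEq ρ]

theorem sNeg_sound_deterministic_general (N : Negotiation A ν ρ Q)
    (hS : N.Sound) (hD : N.Deterministic) (s : ν)
    (hsync : ∃ σ : List (ν × ρ), N.Synchronizes s σ) :
    ∀ M : Negotiation {a : A // a ∈ N.parties s} ν ρ (fun a => Q a.1),
      N.IsSNeg s M → M.Sound ∧ M.Deterministic := by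
  intro M hM
  obtain ⟨nf, hM⟩ := hM.exists_isSNegControl
  obtain ⟨σ, hσ⟩ := hsync
  have hs : s ∈ N.FragAtoms s := ⟨σ, hσ, hσ.2.1⟩
  exact ⟨⟨fun n hn => hM.exists_reachable_enables hD hS hs hn,
    fun τ y hy => hM.exists_occ_finalM hD hS hs ⟨τ, hy⟩⟩, hM.deterministic hD⟩

/-- If `s` synchronizes at least one loop of the SDN `N`, then the
`s`-negotiation `N_s` is a sound deterministic negotiation. -/
theorem sNeg_sound_deterministic (N : Negotiation A ν ρ Q)
    (hS : N.Sound) (hD : N.Deterministic) (s : ν) (hs : s ∈ N.atoms)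
    (hsync : ∃ σ : List (ν × ρ), N.Synchronizes s σ) :
    ∀ M : Negotiation {a : A // a ∈ N.parties s} ν ρ (fun a => Q a.1),
      N.IsSNeg s M → M.Sound ∧ M.Deterministic :=
  sNeg_sound_deterministic_general N hS hD s hsync
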